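/- Exact recovery via dual certificate: Let ρ be Hermitian with tangent space T and ℛ a self-adjoint linear map on Hermitian matrices. Suppose Δ ≠ 0 is Hermitian with ℛΔ = 0 and ‖Δ_T‖₂ < n²‖Δ_T⊥‖₂ (where Δ_T = 𝒫_T Δ, Δ_T⊥ = Δ − Δ_T), and suppose there exists Y in the range of ℛ with ‖𝒫_T Y − sign ρ‖₂ ≤ 1/(2n²) and ‖𝒫_T⊥ Y‖ ≤ 1/2. Then ‖ρ + Δ‖₁ > ‖ρ‖₁. -/

import Mathlib

/-!
The matrix `W = sign ρ + sign Δ_T⊥` is a contraction: `sign Δ_T⊥` lives on the orthogonal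
complement of the range of `ρ`, so `|⟨x, W x⟩| ≤ ⟨x, (P_ρ + P_{Δ_T⊥}) x⟩ ≤ ‖x‖²`, where
`P_ρ + P_{Δ_T⊥}` is an orthogonal projection. Trace duality then gives
`‖ρ + Δ‖₁ ≥ Re tr (W (ρ + Δ)) = ‖ρ‖₁ + ‖Δ_T⊥‖₁ + Re tr (sign ρ · Δ_T)`.
As `(Y, Δ) = 0` and the pairing splits along `T ⊕ T⊥`, the last term equals
`-(𝒫_T Y - sign ρ, Δ_T) - (𝒫_T⊥ Y, Δ_T⊥)`, which Cauchy–Schwarz and Hölder bound below by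
`-‖Δ_T‖₂ / (2n²) - ‖Δ_T⊥‖₁ / 2`. Finally `‖Δ_T‖₂ < n² ‖Δ_T⊥‖₂ ≤ n² ‖Δ_T⊥‖₁`.
-/

open Matrix
open scoped ComplexOrder

noncomputable def opNorm {m : Type*} [Fintype m] [DecidableEq m] (A : Matrix m m ℂ) : ℝ :=
  ‖Matrix.toEuclideanCLM (𝕜 := ℂ) (n := m) A‖

noncomputable def frobNorm {m : Type*} [Fintype m] (A : Matrix m m ℂ) : ℝ :=
  Real.sqrt (∑ i, ∑ j, ‖A i j‖ ^ 2)

noncomputable def traceNorm {m : Type*} [Fintype m] [DecidableEq m] (A : Matrix m m ℂ) : ℝ :=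
  ∑ i, Real.sqrt ((Matrix.posSemidef_conjTranspose_mul_self A).1.eigenvalues i)

/-- `sign` of a Hermitian matrix, via the functional calculus (junk value `0` otherwise). -/
noncomputable def matSign {m : Type*} [Fintype m] [DecidableEq m] (A : Matrix m m ℂ) :
    Matrix m m ℂ :=
  if hA : A.IsHermitian then
    (hA.eigenvectorUnitary : Matrix m m ℂ) *
      Matrix.diagonal (fun i => (Real.sign (hA.eigenvalues i) : ℂ)) *
      star (hA.eigenvectorUnitary : Matrix m m ℂ)
  else 0

/-- The orthogonal projection onto the range of a Hermitian matrix. -/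
noncomputable def rangeProj {m : Type*} [Fintype m] [DecidableEq m] (A : Matrix m m ℂ) :
    Matrix m m ℂ :=
  if hA : A.IsHermitian then
    (hA.eigenvectorUnitary : Matrix m m ℂ) *
      Matrix.diagonal (fun i => if hA.eigenvalues i = 0 then (0 : ℂ) else 1) *
      star (hA.eigenvectorUnitary : Matrix m m ℂ)
  else 0

/-- The orthogonal projection onto the tangent space `T` at `ρ`. -/
noncomputable def projT {m : Type*} [Fintype m] [DecidableEq m] (ρ σ : Matrix m m ℂ) :
    Matrix m m ℂ :=
  rangeProj ρ * σ + σ * rangeProj ρ - rangeProj ρ * σ * rangeProj ρ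

namespace Matrix.IsHermitian
variable {m : Type*} [Fintype m] [DecidableEq m] {A : Matrix m m ℂ}

lemma cfc_mul_cfc (hA : A.IsHermitian) (f g : ℝ → ℝ) :
    hA.cfc f * hA.cfc g = hA.cfc (fun x => f x * g x) := by
  simp only [IsHermitian.cfc, ← map_mul, diagonal_mul_diagonal]
  congr 2
  ext i
  simp

lemma cfc_id_eq (hA : A.IsHermitian) : hA.cfc id = A := hA.spectral_theorem.symm

lemma cfc_mul_id (hA : A.IsHermitian) (f : ℝ → ℝ) :
    hA.cfc (fun x => f x * x) = hA.cfc f * A := by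
  rw [← congrArg (hA.cfc f * ·) hA.cfc_id_eq, cfc_mul_cfc]
  rfl

lemma isHermitian_cfc (hA : A.IsHermitian) (f : ℝ → ℝ) : (hA.cfc f).IsHermitian := by
  rw [← cfc_eq hA]
  exact cfc_predicate f A

lemma trace_cfc (hA : A.IsHermitian) (f : ℝ → ℝ) :
    (hA.cfc f).trace = ∑ i, (f (hA.eigenvalues i) : ℂ) := by
  rw [IsHermitian.cfc, Unitary.conjStarAlgAut_apply, trace_mul_cycle, Unitary.coe_star_mul_self,
    one_mul, trace_diagonal]
  rfl

lemma dotProduct_cfc_mulVec (hA : A.IsHermitian) (f : ℝ → ℝ) (x : m → ℂ) :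
    star x ⬝ᵥ hA.cfc f *ᵥ x = ∑ j,
      (f (hA.eigenvalues j) * ‖(star (hA.eigenvectorUnitary : Matrix m m ℂ) *ᵥ x) j‖ ^ 2 : ℝ) := by
  have hstar : star x ᵥ* (hA.eigenvectorUnitary : Matrix m m ℂ) =
      star (star (hA.eigenvectorUnitary : Matrix m m ℂ) *ᵥ x) := by
    rw [star_mulVec, star_eq_conjTranspose, conjTranspose_conjTranspose]
  rw [IsHermitian.cfc, Unitary.conjStarAlgAut_apply, ← mulVec_mulVec, ← mulVec_mulVec,
    dotProduct_mulVec, hstar]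
  simp only [dotProduct, mulVec_diagonal, Pi.star_apply, Function.comp_apply]
  push_cast
  refine Finset.sum_congr rfl fun j _ => ?_
  rw [← Complex.conj_mul', RCLike.star_def]
  simp only [Complex.coe_algebraMap]
  ring

lemma mul_cfc_eq_zero (hA : A.IsHermitian) {P : Matrix m m ℂ} (hPA : P * A = 0) {f : ℝ → ℝ}
    (hf : f 0 = 0) : P * hA.cfc f = 0 := by
  have hfactor : hA.cfc f = A * hA.cfc (fun x => f x / x) := by
    rw [← congrArg (· * hA.cfc _) hA.cfc_id_eq, cfc_mul_cfc]
    congr 1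
    ext x
    rcases eq_or_ne x 0 with rfl | hx
    · simp [hf]
    · simp [mul_div_cancel₀ _ hx]
  rw [hfactor, ← Matrix.mul_assoc, hPA, Matrix.zero_mul]

open scoped MatrixOrder in
lemma traceNorm_eq_sum_abs_eigenvalues (hA : A.IsHermitian) :
    traceNorm A = ∑ i, |hA.eigenvalues i| := by
  have hM := posSemidef_conjTranspose_mul_self A
  have habs_sq : hA.cfc (|·|) * hA.cfc (|·|) = Aᴴ * A := by
    rw [cfc_mul_cfc, hA.eq, ← congrArg (· * A) hA.cfc_id_eq, ← cfc_mul_id]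
    simp only [abs_mul_abs_self, id]
  have hsqrt : hM.1.cfc Real.sqrt = hA.cfc (|·|) := by
    rw [← cfc_eq, ← cfcₙ_eq_cfc (hf0 := Real.sqrt_zero), ← CFC.sqrt_eq_real_sqrt _ hM.nonneg,
      CFC.sqrt_unique habs_sq (by rw [← cfc_eq]; exact cfc_nonneg fun x _ => abs_nonneg x)]
  have := congrArg trace hsqrt
  rw [trace_cfc, trace_cfc] at this
  exact_mod_cast this

end Matrix.IsHermitian

section
variable {m : Type*} [Fintype m]

lemma dotProduct_star_self_eq_sum_norm_sq (x : m → ℂ) :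
    star x ⬝ᵥ x = ((∑ i, ‖x i‖ ^ 2 : ℝ) : ℂ) := by
  simp only [dotProduct, Pi.star_apply, RCLike.star_def, Complex.conj_mul']
  push_cast
  rfl

lemma frobNorm_nonneg (A : Matrix m m ℂ) : 0 ≤ frobNorm A := Real.sqrt_nonneg _

lemma frobNorm_eq_norm_toLp_uncurry (A : Matrix m m ℂ) :
    frobNorm A = ‖WithLp.toLp 2 (Function.uncurry A)‖ := by
  rw [EuclideanSpace.norm_eq, frobNorm, Fintype.sum_prod_type]
  rfl

lemma trace_conjTranspose_mul_eq_inner (A B : Matrix m m ℂ) :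
    (Aᴴ * B).trace =
      inner ℂ (WithLp.toLp 2 (Function.uncurry A)) (WithLp.toLp 2 (Function.uncurry B)) := by
  rw [EuclideanSpace.inner_eq_star_dotProduct, dotProduct, Fintype.sum_prod_type, Finset.sum_comm]
  simp only [trace, diag_apply, Matrix.mul_apply, conjTranspose_apply, RCLike.star_def, mul_comm,
    Pi.star_apply]
  rfl

lemma abs_re_trace_conjTranspose_mul_le (A B : Matrix m m ℂ) :
    |(Aᴴ * B).trace.re| ≤ frobNorm A * frobNorm B := by
  rw [trace_conjTranspose_mul_eq_inner, frobNorm_eq_norm_toLp_uncurry,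
    frobNorm_eq_norm_toLp_uncurry]
  exact (Complex.abs_re_le_norm _).trans (norm_inner_le_norm _ _)

lemma frobNorm_sq (A : Matrix m m ℂ) : ((frobNorm A ^ 2 : ℝ) : ℂ) = (Aᴴ * A).trace := by
  rw [trace_conjTranspose_mul_eq_inner, inner_self_eq_norm_sq_to_K, frobNorm_eq_norm_toLp_uncurry]
  push_cast
  rfl

variable [DecidableEq m]

lemma frobNorm_le_traceNorm {A : Matrix m m ℂ} (hA : A.IsHermitian) :
    frobNorm A ≤ traceNorm A := by
  have hsq : frobNorm A ^ 2 = ∑ i, hA.eigenvalues i ^ 2 := by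
    have h := frobNorm_sq A
    rw [hA.eq, ← congrArg (· * A) hA.cfc_id_eq, ← hA.cfc_mul_id, hA.trace_cfc] at h
    have h' : ((frobNorm A ^ 2 : ℝ) : ℂ) = ((∑ i, hA.eigenvalues i ^ 2 : ℝ) : ℂ) := by
      rw [h]
      push_cast
      simp only [id, sq]
    exact_mod_cast h'
  rw [hA.traceNorm_eq_sum_abs_eigenvalues]
  refine le_of_pow_le_pow_left₀ two_ne_zero (by positivity) ?_
  rw [hsq]
  simpa only [sq_abs] using
    Finset.sum_sq_le_sq_sum_of_nonneg (s := Finset.univ) (fun i _ => abs_nonneg (hA.eigenvalues i))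

lemma norm_dotProduct_mulVec_le_opNorm (A : Matrix m m ℂ) (x : m → ℂ) :
    ‖star x ⬝ᵥ A *ᵥ x‖ ≤ opNorm A * ∑ i, ‖x i‖ ^ 2 := by
  set v : EuclideanSpace ℂ m := WithLp.toLp 2 x
  have hinner : inner ℂ v (toEuclideanCLM (𝕜 := ℂ) A v) = star x ⬝ᵥ A *ᵥ x := by
    rw [EuclideanSpace.inner_eq_star_dotProduct, dotProduct_comm]
    rfl
  have hv : ‖v‖ ^ 2 = ∑ i, ‖x i‖ ^ 2 := by
    rw [EuclideanSpace.norm_eq, Real.sq_sqrt (by positivity)]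
  calc ‖star x ⬝ᵥ A *ᵥ x‖ = ‖inner ℂ v (toEuclideanCLM (𝕜 := ℂ) A v)‖ := by rw [hinner]
    _ ≤ ‖v‖ * (opNorm A * ‖v‖) := (norm_inner_le_norm _ _).trans <|
        mul_le_mul_of_nonneg_left (ContinuousLinearMap.le_opNorm _ _) (norm_nonneg _)
    _ = opNorm A * ∑ i, ‖x i‖ ^ 2 := by rw [← hv]; ring

open scoped Matrix.Norms.L2Operator in
lemma opNorm_conjTranspose (A : Matrix m m ℂ) : opNorm Aᴴ = opNorm A :=
  l2_opNorm_conjTranspose A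

lemma re_dotProduct_mulVec_le_of_isIdempotentElem {S : Matrix m m ℂ} (hS : S.IsHermitian)
    (hSS : IsIdempotentElem S) (x : m → ℂ) : (star x ⬝ᵥ S *ᵥ x).re ≤ ∑ i, ‖x i‖ ^ 2 := by
  have hsq : ∀ T : Matrix m m ℂ, T.IsHermitian → IsIdempotentElem T →
      star x ⬝ᵥ T *ᵥ x = ((∑ i, ‖(T *ᵥ x) i‖ ^ 2 : ℝ) : ℂ) := by
    intro T hT hTT
    have hT' : T = Tᴴ * T := by rw [hT.eq, hTT.eq]
    conv_lhs => rw [hT']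
    rw [← mulVec_mulVec, dotProduct_mulVec, ← star_mulVec, dotProduct_star_self_eq_sum_norm_sq]
  have hsplit : star x ⬝ᵥ S *ᵥ x + star x ⬝ᵥ (1 - S) *ᵥ x = ((∑ i, ‖x i‖ ^ 2 : ℝ) : ℂ) := by
    rw [← dotProduct_add, ← add_mulVec, add_sub_cancel, one_mulVec,
      dotProduct_star_self_eq_sum_norm_sq]
  have hcompl := hsq (1 - S) (isHermitian_one.sub hS) hSS.one_sub
  have := congrArg Complex.re hsplit
  rw [Complex.add_re, hcompl, Complex.ofReal_re, Complex.ofReal_re] at this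
  have : 0 ≤ ∑ i, ‖((1 - S) *ᵥ x) i‖ ^ 2 := by positivity
  linarith

lemma norm_trace_mul_le {A B : Matrix m m ℂ} (hB : B.IsHermitian) {c : ℝ}
    (hA : ∀ x : m → ℂ, ‖star x ⬝ᵥ A *ᵥ x‖ ≤ c * ∑ i, ‖x i‖ ^ 2) :
    ‖(A * B).trace‖ ≤ c * traceNorm B := by
  set U : Matrix m m ℂ := (hB.eigenvectorUnitary : Matrix m m ℂ)
  set u : m → m → ℂ := fun j i => U i j
  have hu : ∀ j, ∑ i, ‖u j i‖ ^ 2 = 1 := fun j => by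
    have h := hB.eigenvectorBasis.orthonormal.1 j
    rw [EuclideanSpace.norm_eq, Real.sqrt_eq_one] at h
    exact h
  have hdiag : ∀ j, (star U * (A * U)) j j = star (u j) ⬝ᵥ A *ᵥ u j := fun j => by
    simp only [Matrix.mul_apply, dotProduct, mulVec, star_apply, Pi.star_apply, Finset.mul_sum, u]
  have htrace : (A * B).trace = ∑ j, star (u j) ⬝ᵥ A *ᵥ u j * (hB.eigenvalues j : ℂ) := by
    conv_lhs => rw [hB.spectral_theorem, Unitary.conjStarAlgAut_apply]
    rw [← Matrix.mul_assoc, ← Matrix.mul_assoc, trace_mul_comm, ← Matrix.mul_assoc, trace]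
    exact Finset.sum_congr rfl fun j _ => by rw [diag_apply, mul_diagonal, hdiag]; rfl
  calc ‖(A * B).trace‖ ≤ ∑ j, ‖star (u j) ⬝ᵥ A *ᵥ u j‖ * |hB.eigenvalues j| := by
        rw [htrace]
        refine (norm_sum_le _ _).trans_eq (Finset.sum_congr rfl fun j _ => ?_)
        rw [norm_mul, Complex.norm_real, Real.norm_eq_abs]
    _ ≤ ∑ j, c * |hB.eigenvalues j| := by
        gcongr with j
        simpa [hu j] using hA (u j)
    _ = c * traceNorm B := by rw [hB.traceNorm_eq_sum_abs_eigenvalues, Finset.mul_sum]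

end

lemma Real.sign_mul_self (x : ℝ) : Real.sign x * x = |x| := by
  rcases lt_trichotomy x 0 with h | rfl | h
  · rw [Real.sign_of_neg h, abs_of_neg h, neg_one_mul]
  · simp
  · rw [Real.sign_of_pos h, abs_of_pos h, one_mul]

section
variable {m : Type*} [Fintype m] [DecidableEq m] {A : Matrix m m ℂ}

lemma matSign_eq_cfc (hA : A.IsHermitian) : matSign A = hA.cfc Real.sign := by
  rw [matSign, dif_pos hA]
  rfl

lemma rangeProj_eq_cfc (hA : A.IsHermitian) :
    rangeProj A = hA.cfc (fun x => if x = 0 then 0 else 1) := by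
  rw [rangeProj, dif_pos hA, IsHermitian.cfc, Unitary.conjStarAlgAut_apply]
  congr 3
  ext i
  split_ifs with h <;> simp [h]

lemma isHermitian_matSign (hA : A.IsHermitian) : (matSign A).IsHermitian :=
  matSign_eq_cfc hA ▸ hA.isHermitian_cfc _

lemma isHermitian_rangeProj (hA : A.IsHermitian) : (rangeProj A).IsHermitian :=
  rangeProj_eq_cfc hA ▸ hA.isHermitian_cfc _

lemma isIdempotentElem_rangeProj (hA : A.IsHermitian) : IsIdempotentElem (rangeProj A) := by
  rw [IsIdempotentElem, rangeProj_eq_cfc hA, hA.cfc_mul_cfc]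
  congr 1
  ext x
  split_ifs <;> simp

lemma rangeProj_mul_self (hA : A.IsHermitian) : rangeProj A * A = A := by
  rw [rangeProj_eq_cfc hA, ← hA.cfc_mul_id]
  conv_rhs => rw [← hA.cfc_id_eq]
  congr 1
  ext x
  split_ifs with hx <;> simp [hx]

lemma matSign_mul_rangeProj (hA : A.IsHermitian) : matSign A * rangeProj A = matSign A := by
  rw [matSign_eq_cfc hA, rangeProj_eq_cfc hA, hA.cfc_mul_cfc]
  congr 1
  ext x
  split_ifs with hx <;> simp [hx]

lemma trace_matSign_mul_self (hA : A.IsHermitian) : (matSign A * A).trace = traceNorm A := by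
  rw [matSign_eq_cfc hA, ← hA.cfc_mul_id, hA.trace_cfc, hA.traceNorm_eq_sum_abs_eigenvalues]
  simp only [Real.sign_mul_self, Complex.ofReal_sum]

lemma mul_matSign_eq_zero (hA : A.IsHermitian) {P : Matrix m m ℂ} (hPA : P * A = 0) :
    P * matSign A = 0 :=
  matSign_eq_cfc hA ▸ hA.mul_cfc_eq_zero hPA Real.sign_zero

lemma mul_rangeProj_eq_zero (hA : A.IsHermitian) {P : Matrix m m ℂ} (hPA : P * A = 0) :
    P * rangeProj A = 0 :=
  rangeProj_eq_cfc hA ▸ hA.mul_cfc_eq_zero hPA (if_pos rfl)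

lemma norm_dotProduct_matSign_mulVec_le (hA : A.IsHermitian) (x : m → ℂ) :
    ‖star x ⬝ᵥ matSign A *ᵥ x‖ ≤ (star x ⬝ᵥ rangeProj A *ᵥ x).re := by
  rw [matSign_eq_cfc hA, rangeProj_eq_cfc hA, hA.dotProduct_cfc_mulVec,
    hA.dotProduct_cfc_mulVec, Complex.norm_real, Complex.ofReal_re, Real.norm_eq_abs]
  refine (Finset.abs_sum_le_sum_abs _ _).trans (Finset.sum_le_sum fun j _ => ?_)
  rw [abs_mul, abs_sq]
  gcongr
  split_ifs with h
  · simp [h]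
  · rcases Real.sign_apply_eq_of_ne_zero _ h with h' | h' <;> simp [h']

variable {ρ Δ : Matrix m m ℂ}

lemma sub_projT_eq (ρ σ : Matrix m m ℂ) :
    σ - projT ρ σ = (1 - rangeProj ρ) * σ * (1 - rangeProj ρ) := by
  unfold projT
  noncomm_ring

lemma rangeProj_mul_sub_projT (hρ : ρ.IsHermitian) (σ : Matrix m m ℂ) :
    rangeProj ρ * (σ - projT ρ σ) = 0 := by
  rw [sub_projT_eq, ← Matrix.mul_assoc, ← Matrix.mul_assoc,
    (isIdempotentElem_rangeProj hρ).mul_one_sub_self, Matrix.zero_mul, Matrix.zero_mul]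

lemma sub_projT_mul_rangeProj (hρ : ρ.IsHermitian) (σ : Matrix m m ℂ) :
    (σ - projT ρ σ) * rangeProj ρ = 0 := by
  rw [sub_projT_eq, Matrix.mul_assoc, (isIdempotentElem_rangeProj hρ).one_sub_mul_self,
    Matrix.mul_zero]

lemma conjTranspose_projT (hρ : ρ.IsHermitian) (σ : Matrix m m ℂ) :
    (projT ρ σ)ᴴ = projT ρ σᴴ := by
  simp only [projT, conjTranspose_sub, conjTranspose_add, conjTranspose_mul,
    (isHermitian_rangeProj hρ).eq, Matrix.mul_assoc]
  abel

lemma isHermitian_projT (hρ : ρ.IsHermitian) {σ : Matrix m m ℂ} (hσ : σ.IsHermitian) :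
    (projT ρ σ).IsHermitian := by
  rw [IsHermitian, conjTranspose_projT hρ, hσ.eq]

lemma trace_mul_projT_eq_zero {X : Matrix m m ℂ} (hPX : rangeProj ρ * X = 0)
    (hXP : X * rangeProj ρ = 0) (σ : Matrix m m ℂ) : (X * projT ρ σ).trace = 0 := by
  have h : X * projT ρ σ = X * σ * rangeProj ρ := by
    simp only [projT, Matrix.mul_sub, Matrix.mul_add, ← Matrix.mul_assoc, hXP, Matrix.zero_mul,
      zero_add, sub_zero]
  rw [h, trace_mul_cycle, hPX, Matrix.zero_mul, trace_zero]

lemma trace_conjTranspose_mul_eq_projT_add_sub_projT (hρ : ρ.IsHermitian) (σ τ : Matrix m m ℂ) :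
    (σᴴ * τ).trace =
      ((projT ρ σ)ᴴ * projT ρ τ).trace + ((σ - projT ρ σ)ᴴ * (τ - projT ρ τ)).trace := by
  have hσ : (σ - projT ρ σ)ᴴ = σᴴ - projT ρ σᴴ := by
    rw [conjTranspose_sub, conjTranspose_projT hρ]
  have hTN : ((projT ρ σ)ᴴ * (τ - projT ρ τ)).trace = 0 := by
    rw [trace_mul_comm, conjTranspose_projT hρ]
    exact trace_mul_projT_eq_zero (rangeProj_mul_sub_projT hρ τ) (sub_projT_mul_rangeProj hρ τ) _
  have hNT : ((σ - projT ρ σ)ᴴ * projT ρ τ).trace = 0 := by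
    rw [hσ]
    exact trace_mul_projT_eq_zero (rangeProj_mul_sub_projT hρ _) (sub_projT_mul_rangeProj hρ _) _
  conv_lhs => rw [← add_sub_cancel (projT ρ σ) σ, ← add_sub_cancel (projT ρ τ) τ]
  rw [conjTranspose_add, add_mul, mul_add, mul_add, trace_add, trace_add, trace_add, hTN, hNT]
  ring

lemma norm_dotProduct_matSign_add_matSign_mulVec_le {A B : Matrix m m ℂ} (hA : A.IsHermitian)
    (hB : B.IsHermitian) (hAB : rangeProj A * B = 0) (x : m → ℂ) :
    ‖star x ⬝ᵥ (matSign A + matSign B) *ᵥ x‖ ≤ ∑ i, ‖x i‖ ^ 2 := by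
  have hPQ : rangeProj A * rangeProj B = 0 := mul_rangeProj_eq_zero hB hAB
  have hQP : rangeProj B * rangeProj A = 0 := by
    simpa [(isHermitian_rangeProj hA).eq, (isHermitian_rangeProj hB).eq] using
      congrArg conjTranspose hPQ
  have hsum : IsIdempotentElem (rangeProj A + rangeProj B) :=
    (isIdempotentElem_rangeProj hA).add (isIdempotentElem_rangeProj hB)
      (by rw [hPQ, hQP, add_zero])
  calc ‖star x ⬝ᵥ (matSign A + matSign B) *ᵥ x‖
      ≤ ‖star x ⬝ᵥ matSign A *ᵥ x‖ + ‖star x ⬝ᵥ matSign B *ᵥ x‖ := by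
        rw [add_mulVec, dotProduct_add]
        exact norm_add_le _ _
    _ ≤ (star x ⬝ᵥ rangeProj A *ᵥ x).re + (star x ⬝ᵥ rangeProj B *ᵥ x).re :=
        add_le_add (norm_dotProduct_matSign_mulVec_le hA x)
          (norm_dotProduct_matSign_mulVec_le hB x)
    _ = (star x ⬝ᵥ (rangeProj A + rangeProj B) *ᵥ x).re := by
        rw [add_mulVec, dotProduct_add, Complex.add_re]
    _ ≤ ∑ i, ‖x i‖ ^ 2 :=
        re_dotProduct_mulVec_le_of_isIdempotentElem
          ((isHermitian_rangeProj hA).add (isHermitian_rangeProj hB)) hsum x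

lemma trace_matSign_add_matSign_mul (hρ : ρ.IsHermitian) (hΔ : Δ.IsHermitian) :
    ((matSign ρ + matSign (Δ - projT ρ Δ)) * (ρ + Δ)).trace =
      traceNorm ρ + traceNorm (Δ - projT ρ Δ) + (matSign ρ * projT ρ Δ).trace := by
  set E := Δ - projT ρ Δ
  have hE : E.IsHermitian := hΔ.sub (isHermitian_projT hρ hΔ)
  have hPE : rangeProj ρ * E = 0 := rangeProj_mul_sub_projT hρ Δ
  have hPq : rangeProj ρ * matSign E = 0 := mul_matSign_eq_zero hE hPE
  have hqP : matSign E * rangeProj ρ = 0 := by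
    simpa [(isHermitian_rangeProj hρ).eq, (isHermitian_matSign hE).eq] using
      congrArg conjTranspose hPq
  have hΔ_eq : Δ = projT ρ Δ + E := (add_sub_cancel _ _).symm
  have hsΔ : matSign ρ * Δ = matSign ρ * projT ρ Δ := by
    conv_lhs => rw [hΔ_eq, ← matSign_mul_rangeProj hρ]
    rw [mul_add, Matrix.mul_assoc _ _ E, hPE, Matrix.mul_zero, add_zero, matSign_mul_rangeProj hρ]
  have hqρ : matSign E * ρ = 0 := by
    rw [← rangeProj_mul_self hρ, ← Matrix.mul_assoc, hqP, Matrix.zero_mul]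
  have hqΔ : (matSign E * Δ).trace = traceNorm E := by
    conv_lhs => rw [hΔ_eq]
    rw [mul_add, trace_add, trace_mul_projT_eq_zero hPq hqP Δ, zero_add, trace_matSign_mul_self hE]
  rw [add_mul, mul_add, mul_add, trace_add, trace_add, trace_add, hsΔ, hqΔ, hqρ, trace_zero,
    trace_matSign_mul_self hρ]
  ring

lemma trace_matSign_add_matSign_mul_of_trace_eq_zero (hρ : ρ.IsHermitian) (hΔ : Δ.IsHermitian)
    {Y : Matrix m m ℂ} (hYΔ : (Yᴴ * Δ).trace = 0) :
    ((matSign ρ + matSign (Δ - projT ρ Δ)) * (ρ + Δ)).trace =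
      traceNorm ρ + traceNorm (Δ - projT ρ Δ) - ((projT ρ Y - matSign ρ)ᴴ * projT ρ Δ).trace
        - ((Y - projT ρ Y)ᴴ * (Δ - projT ρ Δ)).trace := by
  have h := trace_conjTranspose_mul_eq_projT_add_sub_projT hρ Y Δ
  rw [trace_matSign_add_matSign_mul hρ hΔ, conjTranspose_sub, (isHermitian_matSign hρ).eq,
    sub_mul, trace_sub]
  linear_combination hYΔ - h

end

lemma one_div_two_mul_mul_lt_one_div_two_mul {a b c : ℝ} (ha : 0 ≤ a) (hc : 0 ≤ c)
    (h : a < c * b) : 1 / (2 * c) * a < 1 / 2 * b := by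
  rcases hc.eq_or_lt with rfl | hc
  · linarith [zero_mul b]
  · rw [div_mul_eq_mul_div, one_mul, div_lt_iff₀ (by positivity)]
    linarith

theorem dual_certificate_recovery_general {n : ℕ}
    (ρ : Matrix (Fin n) (Fin n) ℂ) (hρ : ρ.IsHermitian)
    (R : Matrix (Fin n) (Fin n) ℂ →ₗ[ℝ] Matrix (Fin n) (Fin n) ℂ)
    (hRsa : ∀ A B : Matrix (Fin n) (Fin n) ℂ,
      Matrix.trace ((R A)ᴴ * B) = Matrix.trace (Aᴴ * R B))
    (Δ : Matrix (Fin n) (Fin n) ℂ) (hΔ : Δ.IsHermitian)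
    (hker : R Δ = 0)
    (hscale : frobNorm (projT ρ Δ) < n ^ 2 * frobNorm (Δ - projT ρ Δ))
    (Y : Matrix (Fin n) (Fin n) ℂ)
    (hrange : ∃ Z, R Z = Y)
    (hcert1 : frobNorm (projT ρ Y - matSign ρ) ≤ 1 / (2 * n ^ 2))
    (hcert2 : opNorm (Y - projT ρ Y) ≤ 1 / 2) :
    traceNorm ρ < traceNorm (ρ + Δ) := by
  obtain ⟨Z, rfl⟩ := hrange
  have hE : (Δ - projT ρ Δ).IsHermitian := hΔ.sub (isHermitian_projT hρ hΔ)
  have hYΔ : ((R Z)ᴴ * Δ).trace = 0 := by rw [hRsa, hker, Matrix.mul_zero, trace_zero]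
  have hdual :
      ((matSign ρ + matSign (Δ - projT ρ Δ)) * (ρ + Δ)).trace.re ≤ traceNorm (ρ + Δ) := by
    refine (Complex.re_le_norm _).trans ?_
    simpa using norm_trace_mul_le (hρ.add hΔ) (c := 1) fun x => by
      simpa using norm_dotProduct_matSign_add_matSign_mulVec_le hρ hE
        (rangeProj_mul_sub_projT hρ Δ) x
  have htangent : |((projT ρ (R Z) - matSign ρ)ᴴ * projT ρ Δ).trace.re| ≤
      1 / (2 * n ^ 2) * frobNorm (projT ρ Δ) :=
    (abs_re_trace_conjTranspose_mul_le _ _).trans (by gcongr; exact frobNorm_nonneg _)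
  have hnormal : ‖((R Z - projT ρ (R Z))ᴴ * (Δ - projT ρ Δ)).trace‖ ≤
      1 / 2 * traceNorm (Δ - projT ρ Δ) :=
    norm_trace_mul_le hE fun x => (norm_dotProduct_mulVec_le_opNorm _ x).trans <| by
      rw [opNorm_conjTranspose]; gcongr
  have hsplit := congrArg Complex.re (trace_matSign_add_matSign_mul_of_trace_eq_zero hρ hΔ hYΔ)
  simp only [Complex.sub_re, Complex.add_re, Complex.ofReal_re] at hsplit
  have hratio : 1 / (2 * n ^ 2) * frobNorm (projT ρ Δ) < 1 / 2 * traceNorm (Δ - projT ρ Δ) :=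
    one_div_two_mul_mul_lt_one_div_two_mul (frobNorm_nonneg _) (by positivity)
      (hscale.trans_le (by gcongr; exact frobNorm_le_traceNorm hE))
  linarith [abs_le.mp htangent, (Complex.re_le_norm _).trans hnormal]

/-- **Exact recovery via a dual certificate.**  If `Δ ≠ 0` is Hermitian with `ℛΔ = 0` and
`‖Δ_T‖₂ < n²‖Δ_T⊥‖₂`, and there is `Y` in the range of the self-adjoint map `ℛ` with
`‖𝒫_T Y − sign ρ‖₂ ≤ 1/(2n²)` and `‖𝒫_T⊥ Y‖ ≤ 1/2`, then `‖ρ + Δ‖₁ > ‖ρ‖₁`. -/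
theorem dual_certificate_recovery {n : ℕ} (hn : 0 < n)
    (ρ : Matrix (Fin n) (Fin n) ℂ) (hρ : ρ.IsHermitian)
    (R : Matrix (Fin n) (Fin n) ℂ →ₗ[ℝ] Matrix (Fin n) (Fin n) ℂ)
    (hRsa : ∀ A B : Matrix (Fin n) (Fin n) ℂ,
      Matrix.trace ((R A)ᴴ * B) = Matrix.trace (Aᴴ * R B))
    (Δ : Matrix (Fin n) (Fin n) ℂ) (hΔ : Δ.IsHermitian) (hΔne : Δ ≠ 0)
    (hker : R Δ = 0)
    (hscale : frobNorm (projT ρ Δ) < n ^ 2 * frobNorm (Δ - projT ρ Δ))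
    (Y : Matrix (Fin n) (Fin n) ℂ) (hY : Y.IsHermitian)
    (hrange : ∃ Z, R Z = Y)
    (hcert1 : frobNorm (projT ρ Y - matSign ρ) ≤ 1 / (2 * n ^ 2))
    (hcert2 : opNorm (Y - projT ρ Y) ≤ 1 / 2) :
    traceNorm ρ < traceNorm (ρ + Δ) :=
  dual_certificate_recovery_general ρ hρ R hRsa Δ hΔ hker hscale Y hrange hcert1 hcert2
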